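/- Let n ≥ 1, let σ be an invertible 2n×2n complex matrix with σᵀ = −σ, and let α ∈ ℂ^{2n}. Let β, β' ∈ ℂ^{2n} with βᵀσα = 0 and β'ᵀσα = 0, let κ, κ', ν, ν' ∈ ℂ. Let L and L' be 2n×2n matrices over ℂ((z)) of order ≥ −2 such that every coefficient matrix X of L or L' satisfies Xᵀσ + σX = 0 (i.e. L and L' take values in sp(2n)), and: L_{−2} = ν·α·αᵀ·σ, L_{−1} = (α·βᵀ + β·αᵀ)·σ, L_0·α = κ·α, αᵀσL_1α = 0, and the analogous conditions for L' with ν', β', κ'. Then the commutator [L,L'] = L·L' − L'·L has order ≥ −2, every coefficient matrix Y of [L,L'] satisfies Yᵀσ + σY = 0, and there exist ν'' ∈ ℂ, β'' ∈ ℂ^{2n} and κ'' ∈ ℂ such that [L,L']_{−2} = ν''·α·αᵀ·σ, [L,L']_{−1} = (α·β''ᵀ + β''·αᵀ)·σ with β''ᵀσα = 0, [L,L']_0·α = κ''·α, and αᵀσ[L,L']_1α = 0. (This is the sp(2n) case of the theorem that the space of Lax operators is closed under the pointwise commutator, localized at a Tyurin point γ.) -/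

import Mathlib

/-!
Write `S = α αᵀ σ` and `T b = (α bᵀ + b αᵀ) σ`. The conditions on a Lax operator `L` say exactly
that its coefficient `L_k` lies in `F_k = laxFiltration σ α k`: `F_k = 0` for `k < -2`,
`F_(-2) = ℂ S`, `F_(-1) = {T b | bᵀσα = 0}`, `F_0` is the stabiliser of the line `ℂ α` in
`sp(σ)`, `F_1 = {X ∈ sp(σ) | αᵀσXα = 0}` and `F_k = sp(σ)` for `k ≥ 2`. In a symplectic basis
starting with `α`, `F_k` is the sum of the eigenspaces of `ad H`, `H = diag(1, -1, 0, …, 0)`, for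
the eigenvalues `≥ -k`, so `[F_i, F_j] ⊆ F_(i+j)`. Directly, each case of this inclusion follows
from `αᵀσα = 0` and the rank-one identities `(a bᵀσ)(c dᵀσ) = (bᵀσc) a dᵀσ` and
`[X, a bᵀσ] = (Xa) bᵀσ + a (Xb)ᵀσ` for `X ∈ sp(σ)`. Since `[L, L']_k = ∑_(i+j=k) [L_i, L'_j]`,
the commutator satisfies the same conditions.
-/

open Matrix

/-- The matrix of `z^k`-coefficients of a matrix of formal Laurent series. -/
noncomputable def coeffM {n : ℕ} (A : Matrix (Fin n) (Fin n) (LaurentSeries ℂ)) (k : ℤ) :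
    Matrix (Fin n) (Fin n) ℂ :=
  fun i j => (A i j).coeff k

/-- `A` has order `≥ m`: all coefficients below `m` vanish. -/
def ordGE {n : ℕ} (A : Matrix (Fin n) (Fin n) (LaurentSeries ℂ)) (m : ℤ) : Prop :=
  ∀ k : ℤ, k < m → coeffM A k = 0

section RankOne

variable {R ι : Type*} [CommRing R] [Fintype ι] {σ : Matrix ι ι R}

theorem dotProduct_mulVec_comm_of_transpose_eq_neg (hσ : σᵀ = -σ) (v w : ι → R) :
    v ⬝ᵥ σ *ᵥ w = -(w ⬝ᵥ σ *ᵥ v) := by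
  rw [dotProduct_mulVec, ← mulVec_transpose, hσ, neg_mulVec, neg_dotProduct, dotProduct_comm]

theorem vecMulVec_mul_mulVec (σ : Matrix ι ι R) (a b w : ι → R) :
    (vecMulVec a b * σ) *ᵥ w = (b ⬝ᵥ σ *ᵥ w) • a := by
  rw [← mulVec_mulVec, vecMulVec_mulVec, op_smul_eq_smul]

theorem vecMulVec_mul_mul_vecMulVec_mul (σ : Matrix ι ι R) (a b c d : ι → R) :
    vecMulVec a b * σ * (vecMulVec c d * σ) = (b ⬝ᵥ σ *ᵥ c) • (vecMulVec a d * σ) := by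
  rw [← mul_assoc, mul_assoc _ σ, mul_vecMulVec, vecMulVec_mul_vecMulVec, vecMulVec_smul,
    smul_mul_assoc]

variable [DecidableEq ι] {X : Matrix ι ι R}

theorem mem_skewAdjointMatricesSubmodule_iff_add_eq_zero :
    X ∈ skewAdjointMatricesSubmodule σ ↔ Xᵀ * σ + σ * X = 0 := by
  simp [Matrix.IsSkewAdjoint, Matrix.IsAdjointPair, eq_neg_iff_add_eq_zero]

theorem mul_eq_neg_transpose_mul_of_mem (hX : X ∈ skewAdjointMatricesSubmodule σ) :
    σ * X = -(Xᵀ * σ) :=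
  eq_neg_of_add_eq_zero_right (mem_skewAdjointMatricesSubmodule_iff_add_eq_zero.1 hX)

theorem dotProduct_mulVec_mulVec_of_mem (hX : X ∈ skewAdjointMatricesSubmodule σ) (v w : ι → R) :
    v ⬝ᵥ σ *ᵥ (X *ᵥ w) = -((X *ᵥ v) ⬝ᵥ σ *ᵥ w) := by
  rw [mulVec_mulVec, mul_eq_neg_transpose_mul_of_mem hX, neg_mulVec, dotProduct_neg,
    ← mulVec_mulVec, dotProduct_mulVec, vecMul_transpose]

theorem commutator_vecMulVec_mul_of_mem (hX : X ∈ skewAdjointMatricesSubmodule σ) (a b : ι → R) :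
    X * (vecMulVec a b * σ) - vecMulVec a b * σ * X =
      vecMulVec (X *ᵥ a) b * σ + vecMulVec a (X *ᵥ b) * σ := by
  have hleft : X * (vecMulVec a b * σ) = vecMulVec (X *ᵥ a) b * σ := by
    rw [← mul_assoc, mul_vecMulVec]
  have hright : vecMulVec a b * σ * X = -(vecMulVec a (X *ᵥ b) * σ) := by
    rw [mul_assoc, mul_eq_neg_transpose_mul_of_mem hX, mul_neg, ← mul_assoc, vecMulVec_mul,
      vecMul_transpose]
  rw [hleft, hright, sub_neg_eq_add]

end RankOne

section LaxFiltration

variable {R ι : Type*} [CommRing R] [Fintype ι] [DecidableEq ι]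

def laxFiltration (σ : Matrix ι ι R) (α : ι → R) (k : ℤ) : Submodule R (Matrix ι ι R) where
  carrier := {X | X ∈ skewAdjointMatricesSubmodule σ ∧
    (k < -2 → X = 0) ∧
    (k = -2 → ∃ ν : R, X = ν • (vecMulVec α α * σ)) ∧
    (k = -1 → ∃ β, β ⬝ᵥ σ *ᵥ α = 0 ∧ X = (vecMulVec α β + vecMulVec β α) * σ) ∧
    (k = 0 → ∃ κ : R, X *ᵥ α = κ • α) ∧
    (k = 1 → α ⬝ᵥ σ *ᵥ (X *ᵥ α) = 0)}
  add_mem' := by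
    rintro X Y ⟨hX, hX₁, hX₂, hX₃, hX₄, hX₅⟩ ⟨hY, hY₁, hY₂, hY₃, hY₄, hY₅⟩
    refine ⟨add_mem hX hY, fun hk => by rw [hX₁ hk, hY₁ hk, add_zero], fun hk => ?_,
      fun hk => ?_, fun hk => ?_, fun hk => by rw [add_mulVec, mulVec_add, dotProduct_add,
        hX₅ hk, hY₅ hk, add_zero]⟩
    · obtain ⟨ν, rfl⟩ := hX₂ hk
      obtain ⟨ν', rfl⟩ := hY₂ hk
      exact ⟨ν + ν', (add_smul ν ν' _).symm⟩
    · obtain ⟨β, hβ, rfl⟩ := hX₃ hk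
      obtain ⟨β', hβ', rfl⟩ := hY₃ hk
      refine ⟨β + β', by rw [add_dotProduct, hβ, hβ', add_zero], ?_⟩
      rw [vecMulVec_add, add_vecMulVec, ← add_mul, add_add_add_comm]
    · obtain ⟨κ, hκ⟩ := hX₄ hk
      obtain ⟨κ', hκ'⟩ := hY₄ hk
      exact ⟨κ + κ', by rw [add_mulVec, hκ, hκ', add_smul]⟩
  zero_mem' := ⟨zero_mem _, fun _ => rfl, fun _ => ⟨0, (zero_smul R _).symm⟩,
    fun _ => ⟨0, zero_dotProduct _, by simp⟩, fun _ => ⟨0, by simp⟩, fun _ => by simp⟩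
  smul_mem' := by
    rintro c X ⟨hX, hX₁, hX₂, hX₃, hX₄, hX₅⟩
    refine ⟨Submodule.smul_mem _ c hX, fun hk => by rw [hX₁ hk, smul_zero], fun hk => ?_,
      fun hk => ?_, fun hk => ?_, fun hk => by
        rw [smul_mulVec, mulVec_smul, dotProduct_smul, hX₅ hk, smul_zero]⟩
    · obtain ⟨ν, rfl⟩ := hX₂ hk
      exact ⟨c * ν, (mul_smul c ν _).symm⟩
    · obtain ⟨β, hβ, rfl⟩ := hX₃ hk
      exact ⟨c • β, by rw [smul_dotProduct, hβ, smul_zero], by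
        rw [vecMulVec_smul, smul_vecMulVec, ← smul_add, smul_mul_assoc]⟩
    · obtain ⟨κ, hκ⟩ := hX₄ hk
      exact ⟨c * κ, by rw [smul_mulVec, hκ, mul_smul]⟩

variable {σ : Matrix ι ι R} {α : ι → R} {X Y : Matrix ι ι R} {k : ℤ}

theorem eq_zero_of_mem_laxFiltration (hk : k < -2) (hX : X ∈ laxFiltration σ α k) : X = 0 :=
  hX.2.1 hk

theorem mem_laxFiltration_neg_two :
    X ∈ laxFiltration σ α (-2) ↔
      X ∈ skewAdjointMatricesSubmodule σ ∧ ∃ ν : R, X = ν • (vecMulVec α α * σ) := by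
  simp [laxFiltration]

theorem mem_laxFiltration_neg_one :
    X ∈ laxFiltration σ α (-1) ↔ X ∈ skewAdjointMatricesSubmodule σ ∧
      ∃ β, β ⬝ᵥ σ *ᵥ α = 0 ∧ X = (vecMulVec α β + vecMulVec β α) * σ := by
  simp [laxFiltration]

theorem mem_laxFiltration_zero :
    X ∈ laxFiltration σ α 0 ↔
      X ∈ skewAdjointMatricesSubmodule σ ∧ ∃ κ : R, X *ᵥ α = κ • α := by
  simp [laxFiltration]

theorem mem_laxFiltration_one :
    X ∈ laxFiltration σ α 1 ↔
      X ∈ skewAdjointMatricesSubmodule σ ∧ α ⬝ᵥ σ *ᵥ (X *ᵥ α) = 0 := by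
  simp [laxFiltration]

theorem mulVec_eq_zero_of_mem_laxFiltration (hα : α ⬝ᵥ σ *ᵥ α = 0) (hk : k < 0)
    (hX : X ∈ laxFiltration σ α k) : X *ᵥ α = 0 := by
  obtain hk | rfl | rfl : k < -2 ∨ k = -2 ∨ k = -1 := by omega
  · rw [eq_zero_of_mem_laxFiltration hk hX, zero_mulVec]
  · obtain ⟨-, ν, rfl⟩ := mem_laxFiltration_neg_two.1 hX
    rw [smul_mulVec, vecMulVec_mul_mulVec, hα, zero_smul, smul_zero]
  · obtain ⟨-, β, hβ, rfl⟩ := mem_laxFiltration_neg_one.1 hX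
    rw [add_mul, add_mulVec, vecMulVec_mul_mulVec, vecMulVec_mul_mulVec, hα, hβ, zero_smul,
      zero_smul, add_zero]

theorem dotProduct_mulVec_commutator_mulVec (hX : X ∈ skewAdjointMatricesSubmodule σ) {κ : R}
    (hXα : X *ᵥ α = κ • α) (Y : Matrix ι ι R) :
    α ⬝ᵥ σ *ᵥ ((X * Y - Y * X) *ᵥ α) = -(2 * κ * (α ⬝ᵥ σ *ᵥ (Y *ᵥ α))) := by
  rw [sub_mulVec, ← mulVec_mulVec, ← mulVec_mulVec, hXα, mulVec_sub, dotProduct_sub,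
    dotProduct_mulVec_mulVec_of_mem hX, hXα, mulVec_smul, mulVec_smul, smul_dotProduct,
    dotProduct_smul, smul_eq_mul]
  ring

variable {i j : ℤ}

theorem commutator_eq_zero_of_mem_laxFiltration (hσ : σᵀ = -σ) (hα : α ⬝ᵥ σ *ᵥ α = 0)
    (hi : -2 ≤ i) (hij : i ≤ j) (hk : i + j < -2)
    (hX : X ∈ laxFiltration σ α i) (hY : Y ∈ laxFiltration σ α j) : X * Y - Y * X = 0 := by
  obtain rfl : i = -2 := by omega
  obtain ⟨-, ν, rfl⟩ := mem_laxFiltration_neg_two.1 hX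
  obtain rfl | rfl : j = -2 ∨ j = -1 := by omega
  · obtain ⟨-, ν', rfl⟩ := mem_laxFiltration_neg_two.1 hY
    rw [smul_mul_smul_comm, smul_mul_smul_comm, mul_comm, sub_self]
  · obtain ⟨-, β, hβ, rfl⟩ := mem_laxFiltration_neg_one.1 hY
    have hαβ : α ⬝ᵥ σ *ᵥ β = 0 := by
      rw [dotProduct_mulVec_comm_of_transpose_eq_neg hσ, hβ, neg_zero]
    simp only [smul_mul_assoc, mul_smul_comm, add_mul, mul_add, vecMulVec_mul_mul_vecMulVec_mul,
      hα, hβ, hαβ, zero_smul, add_zero, smul_zero, sub_self]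

theorem exists_commutator_eq_smul_of_mem_laxFiltration (hσ : σᵀ = -σ)
    (hα : α ⬝ᵥ σ *ᵥ α = 0) (hi : -2 ≤ i) (hij : i ≤ j) (hk : i + j = -2)
    (hX : X ∈ laxFiltration σ α i) (hY : Y ∈ laxFiltration σ α j) :
    ∃ ν : R, X * Y - Y * X = ν • (vecMulVec α α * σ) := by
  obtain ⟨rfl, rfl⟩ | ⟨rfl, rfl⟩ : i = -2 ∧ j = 0 ∨ i = -1 ∧ j = -1 := by omega
  · obtain ⟨-, ν, rfl⟩ := mem_laxFiltration_neg_two.1 hX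
    obtain ⟨hY, κ, hYα⟩ := mem_laxFiltration_zero.1 hY
    refine ⟨-(2 * ν * κ), ?_⟩
    rw [smul_mul_assoc, mul_smul_comm, ← smul_sub, ← neg_sub, commutator_vecMulVec_mul_of_mem hY,
      hYα, smul_vecMulVec, vecMulVec_smul]
    simp only [smul_mul_assoc]
    module
  · obtain ⟨-, β, hβ, rfl⟩ := mem_laxFiltration_neg_one.1 hX
    obtain ⟨-, β', hβ', rfl⟩ := mem_laxFiltration_neg_one.1 hY
    have hαβ' : α ⬝ᵥ σ *ᵥ β' = 0 := by
      rw [dotProduct_mulVec_comm_of_transpose_eq_neg hσ, hβ', neg_zero]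
    have hαβ : α ⬝ᵥ σ *ᵥ β = 0 := by
      rw [dotProduct_mulVec_comm_of_transpose_eq_neg hσ, hβ, neg_zero]
    refine ⟨β ⬝ᵥ σ *ᵥ β' - β' ⬝ᵥ σ *ᵥ β, ?_⟩
    simp only [add_mul, mul_add, vecMulVec_mul_mul_vecMulVec_mul, hα, hβ, hβ', hαβ, hαβ',
      zero_smul, add_zero, zero_add]
    module

theorem exists_commutator_eq_vecMulVec_add_vecMulVec_mul_of_mem_laxFiltration (hσ : σᵀ = -σ)
    (hi : -2 ≤ i) (hij : i ≤ j) (hk : i + j = -1)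
    (hX : X ∈ laxFiltration σ α i) (hY : Y ∈ laxFiltration σ α j) :
    ∃ β, β ⬝ᵥ σ *ᵥ α = 0 ∧ X * Y - Y * X = (vecMulVec α β + vecMulVec β α) * σ := by
  obtain ⟨rfl, rfl⟩ | ⟨rfl, rfl⟩ : i = -2 ∧ j = 1 ∨ i = -1 ∧ j = 0 := by omega
  · obtain ⟨-, ν, rfl⟩ := mem_laxFiltration_neg_two.1 hX
    obtain ⟨hY, hYα⟩ := mem_laxFiltration_one.1 hY
    refine ⟨-ν • (Y *ᵥ α), ?_, ?_⟩
    · rw [smul_dotProduct, dotProduct_mulVec_comm_of_transpose_eq_neg hσ, hYα, neg_zero,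
        smul_zero]
    rw [smul_mul_assoc, mul_smul_comm, ← smul_sub, ← neg_sub, commutator_vecMulVec_mul_of_mem hY]
    simp only [smul_vecMulVec, vecMulVec_smul, add_mul, smul_mul_assoc]
    module
  · obtain ⟨-, β, hβ, rfl⟩ := mem_laxFiltration_neg_one.1 hX
    obtain ⟨hY, κ, hYα⟩ := mem_laxFiltration_zero.1 hY
    refine ⟨-(κ • β + Y *ᵥ β), ?_, ?_⟩
    · have hYβ : (Y *ᵥ β) ⬝ᵥ σ *ᵥ α = 0 := by
        have h := dotProduct_mulVec_mulVec_of_mem hY β α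
        rw [hYα, mulVec_smul, dotProduct_smul, hβ, smul_zero] at h
        exact neg_eq_zero.1 h.symm
      rw [neg_dotProduct, add_dotProduct, smul_dotProduct, hβ, hYβ, smul_zero, add_zero, neg_zero]
    have hαβ := commutator_vecMulVec_mul_of_mem hY α β
    have hβα := commutator_vecMulVec_mul_of_mem hY β α
    rw [← neg_sub, add_mul, mul_add, add_mul, add_sub_add_comm, hαβ, hβα, hYα]
    simp only [vecMulVec_neg, neg_vecMulVec, vecMulVec_add, add_vecMulVec, smul_vecMulVec,
      vecMulVec_smul, add_mul, neg_mul, smul_mul_assoc]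
    module

theorem exists_commutator_mulVec_eq_smul_of_mem_laxFiltration (hα : α ⬝ᵥ σ *ᵥ α = 0)
    (hi : -2 ≤ i) (hij : i ≤ j) (hk : i + j = 0)
    (hX : X ∈ laxFiltration σ α i) (hY : Y ∈ laxFiltration σ α j) :
    ∃ κ : R, (X * Y - Y * X) *ᵥ α = κ • α := by
  rw [sub_mulVec, ← mulVec_mulVec, ← mulVec_mulVec]
  obtain ⟨rfl, rfl⟩ | ⟨rfl, rfl⟩ | ⟨rfl, rfl⟩ :
      i = -2 ∧ j = 2 ∨ i = -1 ∧ j = 1 ∨ i = 0 ∧ j = 0 := by omega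
  · rw [mulVec_eq_zero_of_mem_laxFiltration hα (by norm_num) hX, mulVec_zero, sub_zero]
    obtain ⟨-, ν, rfl⟩ := mem_laxFiltration_neg_two.1 hX
    exact ⟨ν * (α ⬝ᵥ σ *ᵥ (Y *ᵥ α)), by rw [smul_mulVec, vecMulVec_mul_mulVec, smul_smul]⟩
  · rw [mulVec_eq_zero_of_mem_laxFiltration hα (by norm_num) hX, mulVec_zero, sub_zero]
    obtain ⟨-, β, -, rfl⟩ := mem_laxFiltration_neg_one.1 hX
    obtain ⟨-, hYα⟩ := mem_laxFiltration_one.1 hY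
    refine ⟨β ⬝ᵥ σ *ᵥ (Y *ᵥ α), ?_⟩
    rw [add_mul, add_mulVec, vecMulVec_mul_mulVec, vecMulVec_mul_mulVec, hYα, zero_smul, add_zero]
  · obtain ⟨-, κ, hXα⟩ := mem_laxFiltration_zero.1 hX
    obtain ⟨-, κ', hYα⟩ := mem_laxFiltration_zero.1 hY
    refine ⟨0, ?_⟩
    rw [hXα, hYα, mulVec_smul, mulVec_smul, hXα, hYα, smul_smul, smul_smul, mul_comm, sub_self,
      zero_smul]

theorem dotProduct_mulVec_commutator_mulVec_eq_zero_of_mem_laxFiltration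
    (hα : α ⬝ᵥ σ *ᵥ α = 0) (hij : i ≤ j) (hk : i + j = 1)
    (hX : X ∈ laxFiltration σ α i) (hY : Y ∈ laxFiltration σ α j) :
    α ⬝ᵥ σ *ᵥ ((X * Y - Y * X) *ᵥ α) = 0 := by
  rcases lt_or_eq_of_le (show i ≤ 0 by omega) with hi₀ | rfl
  · have hXα : X *ᵥ α = (0 : R) • α := by
      rw [zero_smul, mulVec_eq_zero_of_mem_laxFiltration hα hi₀ hX]
    rw [dotProduct_mulVec_commutator_mulVec hX.1 hXα, mul_zero, zero_mul, neg_zero]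
  · obtain rfl : j = 1 := by omega
    obtain ⟨hX, κ, hXα⟩ := mem_laxFiltration_zero.1 hX
    rw [dotProduct_mulVec_commutator_mulVec hX hXα, (mem_laxFiltration_one.1 hY).2, mul_zero,
      neg_zero]

theorem commutator_mem_laxFiltration (hσ : σᵀ = -σ) (hα : α ⬝ᵥ σ *ᵥ α = 0)
    (hX : X ∈ laxFiltration σ α i) (hY : Y ∈ laxFiltration σ α j) :
    X * Y - Y * X ∈ laxFiltration σ α (i + j) := by
  wlog hij : i ≤ j generalizing X Y i j
  · rw [← neg_sub, add_comm]
    exact neg_mem (this hY hX (by omega))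
  rcases lt_or_ge i (-2) with hi | hi
  · rw [eq_zero_of_mem_laxFiltration hi hX, zero_mul, mul_zero, sub_zero]
    exact zero_mem _
  have hsp := LieRing.of_associative_ring_bracket X Y ▸ isSkewAdjoint_bracket σ hX.1 hY.1
  exact ⟨hsp,
    fun hk => commutator_eq_zero_of_mem_laxFiltration hσ hα hi hij hk hX hY,
    fun hk => exists_commutator_eq_smul_of_mem_laxFiltration hσ hα hi hij hk hX hY,
    fun hk => exists_commutator_eq_vecMulVec_add_vecMulVec_mul_of_mem_laxFiltration hσ hi hij hk
      hX hY,
    fun hk => exists_commutator_mulVec_eq_smul_of_mem_laxFiltration hα hi hij hk hX hY,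
    fun hk => dotProduct_mulVec_commutator_mulVec_eq_zero_of_mem_laxFiltration hα hij hk hX hY⟩

end LaxFiltration

theorem LaurentSeries.coeff_mul_eq_sum_Icc {R : Type*} [Semiring R] {f g : LaurentSeries R}
    {a b : ℤ} (hf : ∀ i < a, f.coeff i = 0) (hg : ∀ i < b, g.coeff i = 0) (k : ℤ) :
    (f * g).coeff k = ∑ i ∈ Finset.Icc a (k - b), f.coeff i * g.coeff (k - i) := by
  rw [HahnSeries.coeff_mul]
  refine Finset.sum_bij_ne_zero (fun ij _ _ => ij.1) ?_ ?_ ?_ ?_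
  · rintro ⟨i, j⟩ hij -
    simp only [Finset.mem_antidiagonal, HahnSeries.mem_support] at hij
    obtain ⟨hi, hj, rfl⟩ := hij
    have : a ≤ i := not_lt.1 fun h => hi (hf i h)
    have : b ≤ j := not_lt.1 fun h => hj (hg j h)
    simp only [Finset.mem_Icc]
    omega
  · rintro ⟨i, j⟩ hij - ⟨i', j'⟩ hij' - rfl
    simp only [Finset.mem_antidiagonal] at hij hij'
    simp only [Prod.mk.injEq, true_and]
    omega
  · intro i _ hi
    refine ⟨(i, k - i), ?_, by simpa using hi, rfl⟩
    simp only [Finset.mem_antidiagonal, HahnSeries.mem_support, add_sub_cancel]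
    exact ⟨left_ne_zero_of_mul hi, right_ne_zero_of_mul hi, trivial⟩
  · rintro ⟨i, j⟩ hij -
    simp only [Finset.mem_antidiagonal] at hij
    rw [← hij.2.2, add_sub_cancel_left]

theorem coeffM_sub {n : ℕ} (A B : Matrix (Fin n) (Fin n) (LaurentSeries ℂ)) (k : ℤ) :
    coeffM (A - B) k = coeffM A k - coeffM B k := by
  ext p q
  exact HahnSeries.coeff_sub

theorem coeffM_mul_eq_sum_Icc {n : ℕ} {A B : Matrix (Fin n) (Fin n) (LaurentSeries ℂ)} {a b : ℤ}
    (hA : ordGE A a) (hB : ordGE B b) (k : ℤ) :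
    coeffM (A * B) k = ∑ i ∈ Finset.Icc a (k - b), coeffM A i * coeffM B (k - i) := by
  ext p q
  have hcoeff (A : Matrix (Fin n) (Fin n) (LaurentSeries ℂ)) (m : ℤ) (hA : ordGE A m) (p q) :
      ∀ i < m, (A p q).coeff i = 0 := fun i hi => congrFun (congrFun (hA i hi) p) q
  simp only [coeffM, mul_apply, HahnSeries.coeff_sum, Matrix.sum_apply,
    LaurentSeries.coeff_mul_eq_sum_Icc (hcoeff A a hA _ _) (hcoeff B b hB _ _)]
  exact Finset.sum_comm

theorem coeffM_commutator {n : ℕ} {A B : Matrix (Fin n) (Fin n) (LaurentSeries ℂ)} {m : ℤ}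
    (hA : ordGE A m) (hB : ordGE B m) (k : ℤ) :
    coeffM (A * B - B * A) k = ∑ i ∈ Finset.Icc m (k - m),
      (coeffM A i * coeffM B (k - i) - coeffM B (k - i) * coeffM A i) := by
  rw [coeffM_sub, coeffM_mul_eq_sum_Icc hA hB, coeffM_mul_eq_sum_Icc hB hA, Finset.sum_sub_distrib]
  congr 1
  have hreflect : ∀ i ∈ Finset.Icc m (k - m), k - i ∈ Finset.Icc m (k - m) := by
    intro i hi
    simp only [Finset.mem_Icc] at hi ⊢
    omega
  exact Finset.sum_nbij' (k - ·) (k - ·) hreflect hreflect (fun i _ => sub_sub_cancel k i)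
    (fun i _ => sub_sub_cancel k i) (fun i _ => by rw [sub_sub_cancel])

theorem coeffM_mem_laxFiltration {n : ℕ} {σ : Matrix (Fin n) (Fin n) ℂ} {α β : Fin n → ℂ}
    {ν κ : ℂ} {L : Matrix (Fin n) (Fin n) (LaurentSeries ℂ)} (hord : ordGE L (-2))
    (hsp : ∀ k : ℤ, (coeffM L k)ᵀ * σ + σ * coeffM L k = 0)
    (hm2 : coeffM L (-2) = ν • (vecMulVec α α * σ))
    (hm1 : coeffM L (-1) = (vecMulVec α β + vecMulVec β α) * σ) (hβα : β ⬝ᵥ σ *ᵥ α = 0)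
    (h0 : coeffM L 0 *ᵥ α = κ • α) (h1 : α ⬝ᵥ (σ * coeffM L 1) *ᵥ α = 0) (k : ℤ) :
    coeffM L k ∈ laxFiltration σ α k := by
  refine ⟨mem_skewAdjointMatricesSubmodule_iff_add_eq_zero.2 (hsp k), hord k,
    fun hk => ⟨ν, hk ▸ hm2⟩, fun hk => ⟨β, hβα, hk ▸ hm1⟩, fun hk => ⟨κ, hk ▸ h0⟩,
    fun hk => ?_⟩
  subst hk
  rwa [mulVec_mulVec]

theorem lax_sp_commutator_closed_general (n : ℕ)
    (σ : Matrix (Fin (2 * n)) (Fin (2 * n)) ℂ) (hσskew : σᵀ = -σ)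
    (α : Fin (2 * n) → ℂ)
    (β β' : Fin (2 * n) → ℂ)
    (hβα : β ⬝ᵥ σ.mulVec α = 0) (hβ'α : β' ⬝ᵥ σ.mulVec α = 0)
    (κ κ' ν ν' : ℂ)
    (L L' : Matrix (Fin (2 * n)) (Fin (2 * n)) (LaurentSeries ℂ))
    (hLord : ordGE L (-2)) (hL'ord : ordGE L' (-2))
    (hLsp : ∀ k : ℤ, (coeffM L k)ᵀ * σ + σ * coeffM L k = 0)
    (hL'sp : ∀ k : ℤ, (coeffM L' k)ᵀ * σ + σ * coeffM L' k = 0)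
    (hLm2 : coeffM L (-2) = ν • (vecMulVec α α * σ))
    (hL'm2 : coeffM L' (-2) = ν' • (vecMulVec α α * σ))
    (hLm1 : coeffM L (-1) = (vecMulVec α β + vecMulVec β α) * σ)
    (hL'm1 : coeffM L' (-1) = (vecMulVec α β' + vecMulVec β' α) * σ)
    (hL0 : (coeffM L 0).mulVec α = κ • α)
    (hL'0 : (coeffM L' 0).mulVec α = κ' • α)
    (hL1 : α ⬝ᵥ (σ * coeffM L 1).mulVec α = 0)
    (hL'1 : α ⬝ᵥ (σ * coeffM L' 1).mulVec α = 0) :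
    ordGE (L * L' - L' * L) (-2) ∧
    (∀ k : ℤ, (coeffM (L * L' - L' * L) k)ᵀ * σ + σ * coeffM (L * L' - L' * L) k = 0) ∧
    ∃ (ν'' : ℂ) (β'' : Fin (2 * n) → ℂ) (κ'' : ℂ),
      coeffM (L * L' - L' * L) (-2) = ν'' • (vecMulVec α α * σ) ∧
      coeffM (L * L' - L' * L) (-1) = (vecMulVec α β'' + vecMulVec β'' α) * σ ∧
      β'' ⬝ᵥ σ.mulVec α = 0 ∧
      (coeffM (L * L' - L' * L) 0).mulVec α = κ'' • α ∧
      α ⬝ᵥ (σ * coeffM (L * L' - L' * L) 1).mulVec α = 0 := by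
  have hα : α ⬝ᵥ σ *ᵥ α = 0 :=
    self_eq_neg.1 (dotProduct_mulVec_comm_of_transpose_eq_neg hσskew α α)
  have hL := coeffM_mem_laxFiltration hLord hLsp hLm2 hLm1 hβα hL0 hL1
  have hL' := coeffM_mem_laxFiltration hL'ord hL'sp hL'm2 hL'm1 hβ'α hL'0 hL'1
  have hC (k : ℤ) : coeffM (L * L' - L' * L) k ∈ laxFiltration σ α k := by
    rw [coeffM_commutator hLord hL'ord]
    refine Submodule.sum_mem _ fun i _ => ?_
    simpa only [add_sub_cancel] using commutator_mem_laxFiltration hσskew hα (hL i) (hL' (k - i))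
  obtain ⟨-, ν'', hm2⟩ := mem_laxFiltration_neg_two.1 (hC (-2))
  obtain ⟨-, β'', hβ''α, hm1⟩ := mem_laxFiltration_neg_one.1 (hC (-1))
  obtain ⟨-, κ'', h0⟩ := mem_laxFiltration_zero.1 (hC 0)
  obtain ⟨-, h1⟩ := mem_laxFiltration_one.1 (hC 1)
  refine ⟨fun k hk => eq_zero_of_mem_laxFiltration hk (hC k),
    fun k => mem_skewAdjointMatricesSubmodule_iff_add_eq_zero.1 (hC k).1,
    ν'', β'', κ'', hm2, hm1, hβ''α, h0, ?_⟩
  rwa [← mulVec_mulVec]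

/-- The `sp(2n)` case of closedness of the space of Lax operators under the pointwise
commutator, localized at a Tyurin point. -/
theorem lax_sp_commutator_closed (n : ℕ) (hn : 1 ≤ n)
    (σ : Matrix (Fin (2 * n)) (Fin (2 * n)) ℂ) (hσdet : IsUnit σ.det) (hσskew : σᵀ = -σ)
    (α : Fin (2 * n) → ℂ)
    (β β' : Fin (2 * n) → ℂ)
    (hβα : β ⬝ᵥ σ.mulVec α = 0) (hβ'α : β' ⬝ᵥ σ.mulVec α = 0)
    (κ κ' ν ν' : ℂ)
    (L L' : Matrix (Fin (2 * n)) (Fin (2 * n)) (LaurentSeries ℂ))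
    (hLord : ordGE L (-2)) (hL'ord : ordGE L' (-2))
    (hLsp : ∀ k : ℤ, (coeffM L k)ᵀ * σ + σ * coeffM L k = 0)
    (hL'sp : ∀ k : ℤ, (coeffM L' k)ᵀ * σ + σ * coeffM L' k = 0)
    (hLm2 : coeffM L (-2) = ν • (vecMulVec α α * σ))
    (hL'm2 : coeffM L' (-2) = ν' • (vecMulVec α α * σ))
    (hLm1 : coeffM L (-1) = (vecMulVec α β + vecMulVec β α) * σ)
    (hL'm1 : coeffM L' (-1) = (vecMulVec α β' + vecMulVec β' α) * σ)
    (hL0 : (coeffM L 0).mulVec α = κ • α)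
    (hL'0 : (coeffM L' 0).mulVec α = κ' • α)
    (hL1 : α ⬝ᵥ (σ * coeffM L 1).mulVec α = 0)
    (hL'1 : α ⬝ᵥ (σ * coeffM L' 1).mulVec α = 0) :
    ordGE (L * L' - L' * L) (-2) ∧
    (∀ k : ℤ, (coeffM (L * L' - L' * L) k)ᵀ * σ + σ * coeffM (L * L' - L' * L) k = 0) ∧
    ∃ (ν'' : ℂ) (β'' : Fin (2 * n) → ℂ) (κ'' : ℂ),
      coeffM (L * L' - L' * L) (-2) = ν'' • (vecMulVec α α * σ) ∧
      coeffM (L * L' - L' * L) (-1) = (vecMulVec α β'' + vecMulVec β'' α) * σ ∧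
      β'' ⬝ᵥ σ.mulVec α = 0 ∧
      (coeffM (L * L' - L' * L) 0).mulVec α = κ'' • α ∧
      α ⬝ᵥ (σ * coeffM (L * L' - L' * L) 1).mulVec α = 0 :=
  lax_sp_commutator_closed_general n σ hσskew α β β' hβα hβ'α κ κ' ν ν' L L' hLord hL'ord hLsp hL'sp
    hLm2 hL'm2 hLm1 hL'm1 hL0 hL'0 hL1 hL'1
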